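/- Let the two-level staged language have expressions e ::= x | c | e e | fun x -> e | e + e | (e,e) | e :: e | ref e | !e | rset e | let x = e in e | .<e>. | .~e | %e (constants c are integer literals, string literals, and the empty list []), and let its type system derive judgments Γ ⊢ⁿ e : t (n ∈ {0,1}) with the rules of Figure 1: the standard application, abstraction rules indexed uniformly by the level n, the (GenLet) rule Γ ⊢ⁿ v : t and Γ, xⁿ : GEN(Γ,t) ⊢ⁿ e' : t' imply Γ ⊢ⁿ let x = v in e' : t' (restricted to syntactic values v), the (Bracket) rule Γ ⊢ⁿ⁺¹ e : t implies Γ ⊢ⁿ .<e>. : t code, the (Escape) rule Γ ⊢ⁿ e : t code implies Γ ⊢ⁿ⁺¹ .~e : t, and the (CSP) rule Γ ⊢ⁿ x : t implies Γ ⊢ⁿ⁺¹ x : t. Let ⌊·⌋ and ⌈·⌉ be the unstaging translation of Figure 3 (present-stage ⌊·⌋ is the identity homomorphism except ⌊.<e>.⌋ = ⌈e⌉; future-stage ⌈·⌉ maps each construct to the corresponding code combinator: ⌈x⌉ = x, ⌈i⌉ = int i, ⌈s⌉ = str s, ⌈[]⌉ = nil, ⌈e₁ + e₂⌉ = add ⌈e₁⌉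 ⌈e₂⌉, ⌈(e₁,e₂)⌉ = pair ⌈e₁⌉ ⌈e₂⌉, ⌈e₁ :: e₂⌉ = cons ⌈e₁⌉ ⌈e₂⌉, ⌈ref e⌉ = ref_ ⌈e⌉, ⌈!e⌉ = rget ⌈e⌉, ⌈rset e⌉ = rset ⌈e⌉, ⌈e₁ e₂⌉ = app ⌈e₁⌉ ⌈e₂⌉, ⌈fun x -> e⌉ = lam (fun x -> ⌈e⌉), ⌈.~e⌉ = ⌊e⌋, ⌈%e⌉ = csp ⌊e⌋). Extend the translation to types by ⌈t code⌉ = ⌈t⌉ cod and identity otherwise, and to typing environments by ⌈x⁰ : t⌉ = x⁰ : ⌈t⌉ and ⌈x¹ : t⌉ = x⁰ : ⌈t⌉ cod. Then the translation preserves typing: if Γ ⊢⁰ e : t is derivable in the staged type system, then ⌈Γ⌉ ⊢⁰ ⌊e⌋ : ⌈t⌉ is derivable in the target (unstaged) type system extended with the typed code combinators int : int → int cod, str : string → string cod, add : int cod → int cod → int cod, lam : ('a cod → 'b cod) → ('a→'b) cod, app : ('a→'b) cod → 'a cod → 'b cod, pair : 'a cod → 'b cod → ('a * 'b) cod, nil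 : 'a list cod, cons : 'a cod → 'a list cod → 'a list cod, ref_ : 'a cod → 'a ref cod, rget : 'a ref cod → 'a cod, rset : 'a list ref cod → 'a cod → 'a list cod, csp : 'a → 'a cod; and if Γ ⊢¹ e : t is derivable, then ⌈Γ⌉ ⊢⁰ ⌈e⌉ : ⌈t⌉ cod is derivable. -/
import Mathlib


/-!
STATEMENT 0: The unstaging translation ⌊·⌋ / ⌈·⌉ (Figure 3) preserves typing:
if Γ ⊢⁰ e : t in the two-level staged type system (Figure 1), then
⌈Γ⌉ ⊢⁰ ⌊e⌋ : ⌈t⌉ in the unstaged target type system extended with the typed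
code combinators; and if Γ ⊢¹ e : t then ⌈Γ⌉ ⊢⁰ ⌈e⌉ : ⌈t⌉ cod.
-/

namespace Stmt0

/-- Types of the staged source language and of the target language:
type variables, int, string, lists, pairs, arrows, references,
the staged code type `t code` and the target combinator type `t cod`. -/
inductive Ty : Type
  | tvar : ℕ → Ty
  | int : Ty
  | str : Ty
  | list : Ty → Ty
  | prod : Ty → Ty → Ty
  | arr : Ty → Ty → Ty
  | ref : Ty → Ty
  | code : Ty → Ty
  | cod : Ty → Ty
  deriving DecidableEq

/-- Substitution of types for type variables. -/
def Ty.subst (σ : ℕ → Ty) : Ty → Ty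
  | .tvar a => σ a
  | .int => .int
  | .str => .str
  | .list t => .list (t.subst σ)
  | .prod t1 t2 => .prod (t1.subst σ) (t2.subst σ)
  | .arr t1 t2 => .arr (t1.subst σ) (t2.subst σ)
  | .ref t => .ref (t.subst σ)
  | .code t => .code (t.subst σ)
  | .cod t => .cod (t.subst σ)

/-- Free type variables of a type. -/
def Ty.fv : Ty → List ℕ
  | .tvar a => [a]
  | .int => []
  | .str => []
  | .list t => t.fv
  | .prod t1 t2 => t1.fv ++ t2.fv
  | .arr t1 t2 => t1.fv ++ t2.fv
  | .ref t => t.fv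
  | .code t => t.fv
  | .cod t => t.fv

/-- A type schema ∀ α₁ … αₙ . t. -/
structure Scheme where
  vars : List ℕ
  body : Ty

/-- `s.Inst t` : the type `t` is an instance of the schema `s`
(rule (Inst): substituting types for the quantified variables only). -/
def Scheme.Inst (s : Scheme) (t : Ty) : Prop :=
  ∃ σ : ℕ → Ty, (∀ a, a ∉ s.vars → σ a = Ty.tvar a) ∧ t = s.body.subst σ

/-- Free type variables of a schema. -/
def Scheme.fv (s : Scheme) : List ℕ :=
  s.body.fv.filter (fun a => decide (a ∉ s.vars))

/-- Staged typing environments: each variable is recorded together with the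
stage level at which it was bound and its type schema. -/
abbrev SEnv := List (String × ℕ × Scheme)

/-- Free type variables of a staged environment. -/
def SEnv.fv (Γ : SEnv) : List ℕ :=
  Γ.foldr (fun p acc => p.2.2.fv ++ acc) []

/-- GEN(Γ,t) = ∀ α₁…αₙ. t where {α₁…αₙ} = FV(t) − FV(Γ). -/
def gen (Γ : SEnv) (t : Ty) : Scheme :=
  ⟨t.fv.filter (fun a => decide (a ∉ SEnv.fv Γ)), t⟩

/-- Expressions of the two-level staged source language:
e ::= x | i | s | [] | e e | fun x -> e | e + e | (e,e) | e :: e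
    | ref e | !e | rset e e | let x = e in e | .<e>. | .~e | %e
(the mutation primitive `rset` is taken fully applied to its two arguments). -/
inductive Exp : Type
  | var : String → Exp
  | intLit : ℤ → Exp
  | strLit : String → Exp
  | nil : Exp
  | app : Exp → Exp → Exp
  | lam : String → Exp → Exp
  | add : Exp → Exp → Exp
  | pair : Exp → Exp → Exp
  | cons : Exp → Exp → Exp
  | ref : Exp → Exp
  | deref : Exp → Exp
  | rset : Exp → Exp → Exp
  | lett : String → Exp → Exp → Exp
  | bracket : Exp → Exp
  | escape : Exp → Exp
  | csp : Exp → Exp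

/-- Syntactic values (for the value restriction). -/
inductive IsVal : Exp → Prop
  | var : IsVal (.var x)
  | intLit : IsVal (.intLit i)
  | strLit : IsVal (.strLit s)
  | nil : IsVal .nil
  | lam : IsVal (.lam x e)
  | pair : IsVal e1 → IsVal e2 → IsVal (.pair e1 e2)
  | cons : IsVal e1 → IsVal e2 → IsVal (.cons e1 e2)

/-- The level-indexed staged type system of Figure 1: judgments Γ ⊢ⁿ e : t.
The standard rules are indexed uniformly by the level n; (GenLet) is
restricted to syntactic values (the value restriction); let-bindings of
non-values are typed monomorphically; (Bracket), (Escape) and (CSP) are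
the staging rules. -/
inductive Judg : SEnv → ℕ → Exp → Ty → Prop
  | var {Γ : SEnv} {x n s t} :
      Γ.lookup x = some (n, s) → Scheme.Inst s t → Judg Γ n (.var x) t
  | intLit {Γ n i} : Judg Γ n (.intLit i) .int
  | strLit {Γ n s} : Judg Γ n (.strLit s) .str
  | nil {Γ n t} : Judg Γ n .nil (.list t)
  | app {Γ n e1 e2 t' t} :
      Judg Γ n e1 (.arr t' t) → Judg Γ n e2 t' → Judg Γ n (.app e1 e2) t
  | lam {Γ n x e t' t} :
      Judg ((x, n, (⟨[], t'⟩ : Scheme)) :: Γ) n e t →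
      Judg Γ n (.lam x e) (.arr t' t)
  | add {Γ n e1 e2} :
      Judg Γ n e1 .int → Judg Γ n e2 .int → Judg Γ n (.add e1 e2) .int
  | pair {Γ n e1 e2 t1 t2} :
      Judg Γ n e1 t1 → Judg Γ n e2 t2 → Judg Γ n (.pair e1 e2) (.prod t1 t2)
  | cons {Γ n e1 e2 t} :
      Judg Γ n e1 t → Judg Γ n e2 (.list t) → Judg Γ n (.cons e1 e2) (.list t)
  | ref {Γ n e t} : Judg Γ n e t → Judg Γ n (.ref e) (.ref t)
  | deref {Γ n e t} : Judg Γ n e (.ref t) → Judg Γ n (.deref e) t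
  | rset {Γ n e1 e2 t} :
      Judg Γ n e1 (.ref (.list t)) → Judg Γ n e2 t →
      Judg Γ n (.rset e1 e2) (.list t)
  | genLet {Γ : SEnv} {n x e e' t t'} :
      IsVal e → Judg Γ n e t →
      Judg ((x, n, gen Γ t) :: Γ) n e' t' → Judg Γ n (.lett x e e') t'
  | letMono {Γ : SEnv} {n x e e' t t'} :
      Judg Γ n e t →
      Judg ((x, n, (⟨[], t⟩ : Scheme)) :: Γ) n e' t' →
      Judg Γ n (.lett x e e') t'
  | bracket {Γ n e t} : Judg Γ (n+1) e t → Judg Γ n (.bracket e) (.code t)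
  | escape {Γ n e t} : Judg Γ n e (.code t) → Judg Γ (n+1) (.escape e) t
  | csp {Γ n e t} : Judg Γ n e t → Judg Γ (n+1) (.csp e) t

/-- Expressions of the target (unstaged) language: OCaml without the staged
forms, extended with the code-combinator constants of the `Code` signature. -/
inductive TExp : Type
  | var : String → TExp
  | intLit : ℤ → TExp
  | strLit : String → TExp
  | nil : TExp
  | app : TExp → TExp → TExp
  | lam : String → TExp → TExp
  | add : TExp → TExp → TExp
  | pair : TExp → TExp → TExp
  | cons : TExp → TExp → TExp
  | ref : TExp → TExp
  | deref : TExp → TExp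
  | rset : TExp → TExp → TExp
  | lett : String → TExp → TExp → TExp
  -- the code combinators
  | cInt : TExp
  | cStr : TExp
  | cAdd : TExp
  | cLam : TExp
  | cApp : TExp
  | cPair : TExp
  | cNil : TExp
  | cCons : TExp
  | cRef : TExp
  | cRget : TExp
  | cRset : TExp
  | cCsp : TExp

/-- The type schemas of the code combinators:
int : int → int cod,  str : string → string cod,
add : int cod → int cod → int cod,
lam : ('a cod → 'b cod) → ('a→'b) cod,  app : ('a→'b) cod → 'a cod → 'b cod,
pair : 'a cod → 'b cod → ('a*'b) cod,  nil : 'a list cod,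
cons : 'a cod → 'a list cod → 'a list cod,  ref_ : 'a cod → 'a ref cod,
rget : 'a ref cod → 'a cod,  rset : 'a list ref cod → 'a cod → 'a list cod,
csp : 'a → 'a cod. -/
def constTy : TExp → Option Scheme
  | .cInt => some ⟨[], .arr .int (.cod .int)⟩
  | .cStr => some ⟨[], .arr .str (.cod .str)⟩
  | .cAdd => some ⟨[], .arr (.cod .int) (.arr (.cod .int) (.cod .int))⟩
  | .cLam => some ⟨[0,1], .arr (.arr (.cod (.tvar 0)) (.cod (.tvar 1)))
                              (.cod (.arr (.tvar 0) (.tvar 1)))⟩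
  | .cApp => some ⟨[0,1], .arr (.cod (.arr (.tvar 0) (.tvar 1)))
                              (.arr (.cod (.tvar 0)) (.cod (.tvar 1)))⟩
  | .cPair => some ⟨[0,1], .arr (.cod (.tvar 0))
                               (.arr (.cod (.tvar 1)) (.cod (.prod (.tvar 0) (.tvar 1))))⟩
  | .cNil => some ⟨[0], .cod (.list (.tvar 0))⟩
  | .cCons => some ⟨[0], .arr (.cod (.tvar 0))
                             (.arr (.cod (.list (.tvar 0))) (.cod (.list (.tvar 0))))⟩
  | .cRef => some ⟨[0], .arr (.cod (.tvar 0)) (.cod (.ref (.tvar 0)))⟩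
  | .cRget => some ⟨[0], .arr (.cod (.ref (.tvar 0))) (.cod (.tvar 0))⟩
  | .cRset => some ⟨[0], .arr (.cod (.ref (.list (.tvar 0))))
                             (.arr (.cod (.tvar 0)) (.cod (.list (.tvar 0))))⟩
  | .cCsp => some ⟨[0], .arr (.tvar 0) (.cod (.tvar 0))⟩
  | _ => none

/-- Target typing environments. -/
abbrev TEnv := List (String × Scheme)

def TEnv.fv (Γ : TEnv) : List ℕ :=
  Γ.foldr (fun p acc => p.2.fv ++ acc) []

def genT (Γ : TEnv) (t : Ty) : Scheme :=
  ⟨t.fv.filter (fun a => decide (a ∉ TEnv.fv Γ)), t⟩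

/-- Syntactic values of the target language. -/
inductive TIsVal : TExp → Prop
  | var : TIsVal (.var x)
  | intLit : TIsVal (.intLit i)
  | strLit : TIsVal (.strLit s)
  | nil : TIsVal .nil
  | lam : TIsVal (.lam x e)
  | pair : TIsVal e1 → TIsVal e2 → TIsVal (.pair e1 e2)
  | cons : TIsVal e1 → TIsVal e2 → TIsVal (.cons e1 e2)
  | cInt : TIsVal .cInt
  | cStr : TIsVal .cStr
  | cAdd : TIsVal .cAdd
  | cLam : TIsVal .cLam
  | cApp : TIsVal .cApp
  | cPair : TIsVal .cPair
  | cNil : TIsVal .cNil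
  | cCons : TIsVal .cCons
  | cRef : TIsVal .cRef
  | cRget : TIsVal .cRget
  | cRset : TIsVal .cRset
  | cCsp : TIsVal .cCsp

/-- The target (unstaged) type system: the staged rules with the levels
erased, extended with the typed code-combinator constants. -/
inductive TJudg : TEnv → TExp → Ty → Prop
  | var {Γ : TEnv} {x s t} :
      Γ.lookup x = some s → Scheme.Inst s t → TJudg Γ (.var x) t
  | const {Γ c s t} :
      constTy c = some s → Scheme.Inst s t → TJudg Γ c t
  | intLit {Γ i} : TJudg Γ (.intLit i) .int
  | strLit {Γ s} : TJudg Γ (.strLit s) .str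
  | nil {Γ t} : TJudg Γ .nil (.list t)
  | app {Γ e1 e2 t' t} :
      TJudg Γ e1 (.arr t' t) → TJudg Γ e2 t' → TJudg Γ (.app e1 e2) t
  | lam {Γ x e t' t} :
      TJudg ((x, (⟨[], t'⟩ : Scheme)) :: Γ) e t → TJudg Γ (.lam x e) (.arr t' t)
  | add {Γ e1 e2} :
      TJudg Γ e1 .int → TJudg Γ e2 .int → TJudg Γ (.add e1 e2) .int
  | pair {Γ e1 e2 t1 t2} :
      TJudg Γ e1 t1 → TJudg Γ e2 t2 → TJudg Γ (.pair e1 e2) (.prod t1 t2)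
  | cons {Γ e1 e2 t} :
      TJudg Γ e1 t → TJudg Γ e2 (.list t) → TJudg Γ (.cons e1 e2) (.list t)
  | ref {Γ e t} : TJudg Γ e t → TJudg Γ (.ref e) (.ref t)
  | deref {Γ e t} : TJudg Γ e (.ref t) → TJudg Γ (.deref e) t
  | rset {Γ e1 e2 t} :
      TJudg Γ e1 (.ref (.list t)) → TJudg Γ e2 t → TJudg Γ (.rset e1 e2) (.list t)
  | genLet {Γ : TEnv} {x e e' t t'} :
      TIsVal e → TJudg Γ e t →
      TJudg ((x, genT Γ t) :: Γ) e' t' → TJudg Γ (.lett x e e') t'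
  | letMono {Γ : TEnv} {x e e' t t'} :
      TJudg Γ e t →
      TJudg ((x, (⟨[], t⟩ : Scheme)) :: Γ) e' t' → TJudg Γ (.lett x e e') t'

/- The unstaging translation of Figure 3, as the pair of mutually recursive
relations: `Tr0` is ⌊·⌋ (present stage: the identity homomorphism except
⌊.<e>.⌋ = ⌈e⌉), `Tr1` is ⌈·⌉ (future stage: each construct is mapped to the
application of the corresponding code combinator, ⌈.~e⌉ = ⌊e⌋ and
⌈%e⌉ = csp ⌊e⌋). -/
mutual
  inductive Tr0 : Exp → TExp → Prop
    | var : Tr0 (.var x) (.var x)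
    | intLit : Tr0 (.intLit i) (.intLit i)
    | strLit : Tr0 (.strLit s) (.strLit s)
    | nil : Tr0 .nil .nil
    | app : Tr0 e1 e1' → Tr0 e2 e2' → Tr0 (.app e1 e2) (.app e1' e2')
    | lam : Tr0 e e' → Tr0 (.lam x e) (.lam x e')
    | add : Tr0 e1 e1' → Tr0 e2 e2' → Tr0 (.add e1 e2) (.add e1' e2')
    | pair : Tr0 e1 e1' → Tr0 e2 e2' → Tr0 (.pair e1 e2) (.pair e1' e2')
    | cons : Tr0 e1 e1' → Tr0 e2 e2' → Tr0 (.cons e1 e2) (.cons e1' e2')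
    | ref : Tr0 e e' → Tr0 (.ref e) (.ref e')
    | deref : Tr0 e e' → Tr0 (.deref e) (.deref e')
    | rset : Tr0 e1 e1' → Tr0 e2 e2' → Tr0 (.rset e1 e2) (.rset e1' e2')
    | lett : Tr0 e1 e1' → Tr0 e2 e2' → Tr0 (.lett x e1 e2) (.lett x e1' e2')
    | bracket : Tr1 e e' → Tr0 (.bracket e) e'

  inductive Tr1 : Exp → TExp → Prop
    | var : Tr1 (.var x) (.var x)
    | intLit : Tr1 (.intLit i) (.app .cInt (.intLit i))
    | strLit : Tr1 (.strLit s) (.app .cStr (.strLit s))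
    | nil : Tr1 .nil .cNil
    | add : Tr1 e1 e1' → Tr1 e2 e2' → Tr1 (.add e1 e2) (.app (.app .cAdd e1') e2')
    | pair : Tr1 e1 e1' → Tr1 e2 e2' → Tr1 (.pair e1 e2) (.app (.app .cPair e1') e2')
    | cons : Tr1 e1 e1' → Tr1 e2 e2' → Tr1 (.cons e1 e2) (.app (.app .cCons e1') e2')
    | ref : Tr1 e e' → Tr1 (.ref e) (.app .cRef e')
    | deref : Tr1 e e' → Tr1 (.deref e) (.app .cRget e')
    | rset : Tr1 e1 e1' → Tr1 e2 e2' → Tr1 (.rset e1 e2) (.app (.app .cRset e1') e2')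
    | app : Tr1 e1 e1' → Tr1 e2 e2' → Tr1 (.app e1 e2) (.app (.app .cApp e1') e2')
    | lam : Tr1 e e' → Tr1 (.lam x e) (.app .cLam (.lam x e'))
    | escape : Tr0 e e' → Tr1 (.escape e) e'
    | csp : Tr0 e e' → Tr1 (.csp e) (.app .cCsp e')
end

/-- The translation on types: ⌈t code⌉ = ⌈t⌉ cod, and the identity otherwise
(applied homomorphically). -/
def trTy : Ty → Ty
  | .tvar a => .tvar a
  | .int => .int
  | .str => .str
  | .list t => .list (trTy t)
  | .prod t1 t2 => .prod (trTy t1) (trTy t2)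
  | .arr t1 t2 => .arr (trTy t1) (trTy t2)
  | .ref t => .ref (trTy t)
  | .code t => .cod (trTy t)
  | .cod t => .cod (trTy t)

def trScheme (s : Scheme) : Scheme := ⟨s.vars, trTy s.body⟩

/-- The translation on typing environments:
⌈x⁰ : t⌉ = x⁰ : ⌈t⌉ and ⌈x¹ : t⌉ = x⁰ : ⌈t⌉ cod. -/
def trEnv (Γ : SEnv) : TEnv :=
  Γ.map (fun p =>
    (p.1, if p.2.1 = 0 then trScheme p.2.2
          else ⟨p.2.2.vars, .cod (trTy p.2.2.body)⟩))


/-! ### Auxiliary lemmas -/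

lemma Ty.subst_tvar (t : Ty) : t.subst Ty.tvar = t := by
  induction t <;> simp [Ty.subst, *]

lemma trTy_subst (t : Ty) (σ : ℕ → Ty) :
    trTy (t.subst σ) = (trTy t).subst (fun a => trTy (σ a)) := by
  induction t <;> simp [Ty.subst, trTy, *]

lemma inst_refl (b : Ty) : Scheme.Inst ⟨[], b⟩ b :=
  ⟨Ty.tvar, fun _ _ => rfl, (Ty.subst_tvar b).symm⟩

lemma inst_tr {s : Scheme} {t : Ty} (h : s.Inst t) :
    (trScheme s).Inst (trTy t) := by
  obtain ⟨σ, hσ, ht⟩ := h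
  refine ⟨fun a => trTy (σ a), fun a ha => by show trTy (σ a) = _; rw [hσ a ha]; rfl, ?_⟩
  simp [trScheme, ht, trTy_subst]

lemma inst_cod {s : Scheme} {t : Ty} (h : s.Inst t) :
    Scheme.Inst ⟨s.vars, .cod (trTy s.body)⟩ (.cod (trTy t)) := by
  obtain ⟨σ, hσ, ht⟩ := h
  refine ⟨fun a => trTy (σ a), fun a ha => by show trTy (σ a) = _; rw [hσ a ha]; rfl, ?_⟩
  simp [Ty.subst, ht, trTy_subst]

def σ1 (A : Ty) : ℕ → Ty := fun a => if a = 0 then A else .tvar a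
def σ2 (A B : Ty) : ℕ → Ty :=
  fun a => if a = 0 then A else if a = 1 then B else .tvar a

lemma σ1_spec (A : Ty) : ∀ a, a ∉ ([0] : List ℕ) → σ1 A a = .tvar a := by
  intro a ha; simp at ha; simp [σ1, ha]

lemma σ2_spec (A B : Ty) : ∀ a, a ∉ ([0,1] : List ℕ) → σ2 A B a = .tvar a := by
  intro a ha; simp at ha; simp [σ2, ha.1, ha.2]

lemma instNil (A : Ty) :
    Scheme.Inst ⟨[0], .cod (.list (.tvar 0))⟩ (.cod (.list A)) :=
  ⟨σ1 A, σ1_spec A, by simp [Ty.subst, σ1]⟩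

lemma instCsp (A : Ty) :
    Scheme.Inst ⟨[0], .arr (.tvar 0) (.cod (.tvar 0))⟩ (.arr A (.cod A)) :=
  ⟨σ1 A, σ1_spec A, by simp [Ty.subst, σ1]⟩

lemma instRef (A : Ty) :
    Scheme.Inst ⟨[0], .arr (.cod (.tvar 0)) (.cod (.ref (.tvar 0)))⟩
      (.arr (.cod A) (.cod (.ref A))) :=
  ⟨σ1 A, σ1_spec A, by simp [Ty.subst, σ1]⟩

lemma instRget (A : Ty) :
    Scheme.Inst ⟨[0], .arr (.cod (.ref (.tvar 0))) (.cod (.tvar 0))⟩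
      (.arr (.cod (.ref A)) (.cod A)) :=
  ⟨σ1 A, σ1_spec A, by simp [Ty.subst, σ1]⟩

lemma instCons (A : Ty) :
    Scheme.Inst ⟨[0], .arr (.cod (.tvar 0))
        (.arr (.cod (.list (.tvar 0))) (.cod (.list (.tvar 0))))⟩
      (.arr (.cod A) (.arr (.cod (.list A)) (.cod (.list A)))) :=
  ⟨σ1 A, σ1_spec A, by simp [Ty.subst, σ1]⟩

lemma instRset (A : Ty) :
    Scheme.Inst ⟨[0], .arr (.cod (.ref (.list (.tvar 0))))
        (.arr (.cod (.tvar 0)) (.cod (.list (.tvar 0))))⟩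
      (.arr (.cod (.ref (.list A))) (.arr (.cod A) (.cod (.list A)))) :=
  ⟨σ1 A, σ1_spec A, by simp [Ty.subst, σ1]⟩

lemma instLam (A B : Ty) :
    Scheme.Inst ⟨[0,1], .arr (.arr (.cod (.tvar 0)) (.cod (.tvar 1)))
        (.cod (.arr (.tvar 0) (.tvar 1)))⟩
      (.arr (.arr (.cod A) (.cod B)) (.cod (.arr A B))) :=
  ⟨σ2 A B, σ2_spec A B, by simp [Ty.subst, σ2]⟩

lemma instApp (A B : Ty) :
    Scheme.Inst ⟨[0,1], .arr (.cod (.arr (.tvar 0) (.tvar 1)))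
        (.arr (.cod (.tvar 0)) (.cod (.tvar 1)))⟩
      (.arr (.cod (.arr A B)) (.arr (.cod A) (.cod B))) :=
  ⟨σ2 A B, σ2_spec A B, by simp [Ty.subst, σ2]⟩

lemma instPair (A B : Ty) :
    Scheme.Inst ⟨[0,1], .arr (.cod (.tvar 0))
        (.arr (.cod (.tvar 1)) (.cod (.prod (.tvar 0) (.tvar 1))))⟩
      (.arr (.cod A) (.arr (.cod B) (.cod (.prod A B)))) :=
  ⟨σ2 A B, σ2_spec A B, by simp [Ty.subst, σ2]⟩

lemma trTy_fv (t : Ty) : (trTy t).fv = t.fv := by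
  induction t <;> simp [trTy, Ty.fv, *]

lemma trEnv_fv (Γ : SEnv) : TEnv.fv (trEnv Γ) = SEnv.fv Γ := by
  induction Γ with
  | nil => rfl
  | cons p Γ ih =>
    obtain ⟨x, n, s⟩ := p
    by_cases hn : n = 0 <;>
      simp [trEnv, TEnv.fv, SEnv.fv, hn, Scheme.fv, trScheme, trTy_fv, Ty.fv] at * <;>
      simp [ih]

lemma trEnv_cons (x : String) (n : ℕ) (s : Scheme) (Γ : SEnv) :
    trEnv ((x, n, s) :: Γ) =
      (x, if n = 0 then trScheme s else ⟨s.vars, .cod (trTy s.body)⟩) :: trEnv Γ := rfl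

lemma trScheme_gen (Γ : SEnv) (t : Ty) :
    trScheme (gen Γ t) = genT (trEnv Γ) (trTy t) := by
  simp [trScheme, gen, genT, trTy_fv, trEnv_fv]

lemma lookup_trEnv {Γ : SEnv} {x : String} {n : ℕ} {s : Scheme}
    (h : Γ.lookup x = some (n, s)) :
    (trEnv Γ).lookup x =
      some (if n = 0 then trScheme s else ⟨s.vars, .cod (trTy s.body)⟩) := by
  induction Γ with
  | nil => simp [List.lookup] at h
  | cons p Γ ih =>
    obtain ⟨y, m, s'⟩ := p
    rw [trEnv_cons]
    by_cases hxy : x = y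
    · subst hxy
      simp [List.lookup] at h ⊢
      obtain ⟨h1, h2⟩ := h
      subst h1; subst h2; rfl
    · have hbe : (x == y) = false := by simp [hxy]
      simp [List.lookup, hbe] at h ⊢
      exact ih h

lemma trIsVal {e : Exp} {e' : TExp} (hv : IsVal e) (htr : Tr0 e e') :
    TIsVal e' := by
  induction hv generalizing e' with
  | var => cases htr; exact .var
  | intLit => cases htr; exact .intLit
  | strLit => cases htr; exact .strLit
  | nil => cases htr; exact .nil
  | lam => cases htr; exact .lam
  | pair _ _ ih1 ih2 => cases htr with | pair h1 h2 => exact .pair (ih1 h1) (ih2 h2)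
  | cons _ _ ih1 ih2 => cases htr with | cons h1 h2 => exact .cons (ih1 h1) (ih2 h2)

lemma main_lemma {Γ : SEnv} {n : ℕ} {e : Exp} {t : Ty} (h : Judg Γ n e t) :
    (∀ e', n = 0 → Tr0 e e' → TJudg (trEnv Γ) e' (trTy t)) ∧
    (∀ e', n = 1 → Tr1 e e' → TJudg (trEnv Γ) e' (.cod (trTy t))) := by
  induction h with
  | @var Γ x m s t hl hi =>
    constructor
    · intro e' hn htr; cases htr
      subst hn
      exact TJudg.var (by simpa using lookup_trEnv hl) (inst_tr hi)
    · intro e' hn htr; cases htr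
      subst hn
      exact TJudg.var (by simpa using lookup_trEnv hl) (inst_cod hi)
  | intLit =>
    constructor
    · intro e' hn htr; cases htr; exact .intLit
    · intro e' hn htr; cases htr
      exact .app (.const rfl (inst_refl _)) .intLit
  | strLit =>
    constructor
    · intro e' hn htr; cases htr; exact .strLit
    · intro e' hn htr; cases htr
      exact .app (.const rfl (inst_refl _)) .strLit
  | nil =>
    constructor
    · intro e' hn htr; cases htr; exact .nil
    · intro e' hn htr; cases htr; exact .const rfl (instNil _)
  | app _ _ ih1 ih2 =>
    constructor
    · intro e' hn htr
      cases htr with | app h1 h2 => exact .app (ih1.1 _ hn h1) (ih2.1 _ hn h2)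
    · intro e' hn htr
      cases htr with | app h1 h2 =>
      exact .app (.app (.const rfl (instApp _ _)) (ih1.2 _ hn h1)) (ih2.2 _ hn h2)
  | @lam Γ m x e t' t _ ih =>
    constructor
    · intro e' hn htr
      cases htr with | lam h =>
      apply TJudg.lam
      have := ih.1 _ hn h
      rw [trEnv_cons, hn] at this
      exact this
    · intro e' hn htr
      cases htr with | lam h =>
      refine .app (.const rfl (instLam _ _)) (TJudg.lam ?_)
      have := ih.2 _ hn h
      rw [trEnv_cons, hn] at this
      exact this
  | add _ _ ih1 ih2 =>
    constructor
    · intro e' hn htr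
      cases htr with | add h1 h2 => exact .add (ih1.1 _ hn h1) (ih2.1 _ hn h2)
    · intro e' hn htr
      cases htr with | add h1 h2 =>
      exact .app (.app (.const rfl (inst_refl _)) (ih1.2 _ hn h1)) (ih2.2 _ hn h2)
  | pair _ _ ih1 ih2 =>
    constructor
    · intro e' hn htr
      cases htr with | pair h1 h2 => exact .pair (ih1.1 _ hn h1) (ih2.1 _ hn h2)
    · intro e' hn htr
      cases htr with | pair h1 h2 =>
      exact .app (.app (.const rfl (instPair _ _)) (ih1.2 _ hn h1)) (ih2.2 _ hn h2)
  | cons _ _ ih1 ih2 =>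
    constructor
    · intro e' hn htr
      cases htr with | cons h1 h2 => exact .cons (ih1.1 _ hn h1) (ih2.1 _ hn h2)
    · intro e' hn htr
      cases htr with | cons h1 h2 =>
      exact .app (.app (.const rfl (instCons _)) (ih1.2 _ hn h1)) (ih2.2 _ hn h2)
  | ref _ ih =>
    constructor
    · intro e' hn htr
      cases htr with | ref h => exact .ref (ih.1 _ hn h)
    · intro e' hn htr
      cases htr with | ref h =>
      exact .app (.const rfl (instRef _)) (ih.2 _ hn h)
  | deref _ ih =>
    constructor
    · intro e' hn htr
      cases htr with | deref h => exact .deref (ih.1 _ hn h)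
    · intro e' hn htr
      cases htr with | deref h =>
      exact .app (.const rfl (instRget _)) (ih.2 _ hn h)
  | rset _ _ ih1 ih2 =>
    constructor
    · intro e' hn htr
      cases htr with | rset h1 h2 => exact .rset (ih1.1 _ hn h1) (ih2.1 _ hn h2)
    · intro e' hn htr
      cases htr with | rset h1 h2 =>
      exact .app (.app (.const rfl (instRset _)) (ih1.2 _ hn h1)) (ih2.2 _ hn h2)
  | @genLet Γ m x e e' t t' hv _ _ ih1 ih2 =>
    constructor
    · intro e'' hn htr
      cases htr with | lett h1 h2 =>
      refine TJudg.genLet (trIsVal hv h1) (ih1.1 _ hn h1) ?_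
      have := ih2.1 _ hn h2
      rw [trEnv_cons, hn] at this
      simpa [trScheme_gen] using this
    · intro e'' hn htr; cases htr
  | @letMono Γ m x e e' t t' _ _ ih1 ih2 =>
    constructor
    · intro e'' hn htr
      cases htr with | lett h1 h2 =>
      refine TJudg.letMono (ih1.1 _ hn h1) ?_
      have := ih2.1 _ hn h2
      rw [trEnv_cons, hn] at this
      exact this
    · intro e'' hn htr; cases htr
  | bracket _ ih =>
    constructor
    · intro e' hn htr
      cases htr with | bracket h => exact ih.2 _ (by omega) h
    · intro e' hn htr; cases htr
  | escape _ ih =>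
    constructor
    · intro e' hn htr; omega
    · intro e' hn htr
      cases htr with | escape h => exact ih.1 _ (by omega) h
  | csp _ ih =>
    constructor
    · intro e' hn htr; omega
    · intro e' hn htr
      cases htr with | csp h =>
      exact .app (.const rfl (instCsp _)) (ih.1 _ (by omega) h)

/-- **Proposition 1** (typing preservation of the unstaging translation):
if Γ ⊢⁰ e : t is derivable in the staged system then ⌈Γ⌉ ⊢⁰ ⌊e⌋ : ⌈t⌉ is
derivable in the target system, and if Γ ⊢¹ e : t is derivable then
⌈Γ⌉ ⊢⁰ ⌈e⌉ : ⌈t⌉ cod is derivable. -/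
theorem unstaging_translation_preserves_typing :
    (∀ (Γ : SEnv) (e : Exp) (t : Ty) (e' : TExp),
       Judg Γ 0 e t → Tr0 e e' → TJudg (trEnv Γ) e' (trTy t)) ∧
    (∀ (Γ : SEnv) (e : Exp) (t : Ty) (e' : TExp),
       Judg Γ 1 e t → Tr1 e e' → TJudg (trEnv Γ) e' (.cod (trTy t))) := by
  exact ⟨fun Γ e t e' h htr => (main_lemma h).1 e' rfl htr,
         fun Γ e t e' h htr => (main_lemma h).2 e' rfl htr⟩


end Stmt0
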